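/- Let η, p: ℝ × ℝ → ℝ be smooth with η > 0, and suppose the mass conservation relation ∂_t η(x,t) = −∂_x ∫₀^{η(x,t)} v₁(x,z,t) dz holds, where v₁(x,z,t) = (1/2)·z·(z − η(x,t))·∂_x p(x,t) + (1 − z/η(x,t))·v_D. Then η and p satisfy the Reynolds equation −∂_x((η³/12)·∂_x p) = −∂_t η − (1/2)·∂_x(η·v_D). -/

import Mathlib

/-- Derivation of the Reynolds lubrication equation from the explicit
Poiseuille–Couette profile and the depth-integrated mass conservation. -/
theorem stmt2 (η p : ℝ → ℝ → ℝ) (v_D : ℝ)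
    (hη : ContDiff ℝ (⊤ : ℕ∞) (fun q : ℝ × ℝ => η q.1 q.2))
    (hp : ContDiff ℝ (⊤ : ℕ∞) (fun q : ℝ × ℝ => p q.1 q.2))
    (hpos : ∀ x t, 0 < η x t)
    (v₁ : ℝ → ℝ → ℝ → ℝ)
    (hv : ∀ x z t, v₁ x z t
      = (1/2) * z * (z - η x t) * deriv (fun y => p y t) x + (1 - z / η x t) * v_D)
    (hmass : ∀ x t, deriv (fun s => η x s) t
      = - deriv (fun y => ∫ z in (0:ℝ)..(η y t), v₁ y z t) x) :
    ∀ x t : ℝ,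
      - deriv (fun y => (η y t)^3 / 12 * deriv (fun y' => p y' t) y) x
        = - deriv (fun s => η x s) t - (1/2) * deriv (fun y => η y t * v_D) x := by
  intro x t
  set F : ℝ × ℝ → ℝ := fun q => p q.1 q.2 with hF
  have hline : ∀ s : ℝ, ContDiff ℝ (⊤ : ℕ∞) (fun y : ℝ => ((y, s) : ℝ × ℝ)) :=
    fun s => contDiff_id.prodMk contDiff_const
  have hG : ContDiff ℝ (⊤ : ℕ∞) (fun q : ℝ × ℝ => fderiv ℝ F q (1, 0)) :=
    (hp.fderiv_right (m := (⊤ : ℕ∞)) (by simp)).clm_apply contDiff_const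
  have hderiv_eq : ∀ (y s : ℝ), deriv (fun y' => p y' s) y = fderiv ℝ F (y, s) (1, 0) := by
    intro y s
    have h1 : HasDerivAt (fun y' : ℝ => ((y', s) : ℝ × ℝ)) ((1 : ℝ), (0 : ℝ)) y :=
      (hasDerivAt_id y).prodMk (hasDerivAt_const y s)
    have hFd : HasFDerivAt F (fderiv ℝ F (y, s)) (y, s) :=
      (hp.differentiable (by simp) (y, s)).hasFDerivAt
    have := hFd.comp_hasDerivAt y h1
    exact this.deriv
  have hP : ContDiff ℝ (⊤ : ℕ∞) (fun y : ℝ => deriv (fun y' => p y' t) y) := by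
    have : (fun y : ℝ => deriv (fun y' => p y' t) y)
        = (fun q : ℝ × ℝ => fderiv ℝ F q (1, 0)) ∘ (fun y : ℝ => (y, t)) := by
      funext y; exact hderiv_eq y t
    rw [this]; exact hG.comp (hline t)
  have hηt : ContDiff ℝ (⊤ : ℕ∞) (fun y : ℝ => η y t) :=
    hη.comp (hline t)
  -- the integral computation
  have hint : ∀ y : ℝ, (∫ z in (0:ℝ)..(η y t), v₁ y z t)
      = -((η y t)^3 / 12 * deriv (fun y' => p y' t) y) + η y t * v_D / 2 := by
    intro y
    set h := η y t with hh
    set A := deriv (fun y' => p y' t) y with hA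
    have hh0 : h ≠ 0 := (hpos y t).ne'
    have hcong : (∫ z in (0:ℝ)..h, v₁ y z t)
        = ∫ z in (0:ℝ)..h, ((1/2) * z * (z - h) * A + (1 - z / h) * v_D) := by
      apply intervalIntegral.integral_congr
      intro z _
      exact hv y z t
    rw [hcong]
    clear_value h A
    have hder : ∀ z ∈ Set.uIcc (0:ℝ) h,
        HasDerivAt (fun z => A/2 * (z^3/3 - h * z^2/2) + (z - z^2/(2*h)) * v_D)
          ((1/2) * z * (z - h) * A + (1 - z / h) * v_D) z := by
      intro z _
      have h1 : HasDerivAt (fun z : ℝ => A/2 * (z^3/3 - h * z^2/2))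
          (A/2 * (z^2 - h * z)) z := by
        have : HasDerivAt (fun z : ℝ => z^3/3 - h * z^2/2)
            (3 * z^2 / 3 - h * (2 * z) / 2) z := by
          have ha : HasDerivAt (fun z : ℝ => z^3) (3 * z^2) z := by
            simpa using hasDerivAt_pow 3 z
          have hb : HasDerivAt (fun z : ℝ => z^2) (2 * z) z := by
            simpa using hasDerivAt_pow 2 z
          exact (ha.div_const 3).sub ((hb.const_mul h).div_const 2)
        have := this.const_mul (A/2)
        exact this.congr_deriv (by ring)
      have h2 : HasDerivAt (fun z : ℝ => (z - z^2/(2*h)) * v_D)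
          ((1 - z / h) * v_D) z := by
        have hb : HasDerivAt (fun z : ℝ => z^2) (2 * z) z := by
          simpa using hasDerivAt_pow 2 z
        have : HasDerivAt (fun z : ℝ => z - z^2/(2*h)) (1 - 2 * z / (2*h)) z :=
          (hasDerivAt_id z).sub (hb.div_const (2*h))
        have := this.mul_const v_D
        exact this.congr_deriv (by rw [mul_div_mul_left _ _ (two_ne_zero' ℝ)])
      have := h1.add h2
      exact this.congr_deriv (by ring)
    have hcont : IntervalIntegrable
        (fun z => (1/2) * z * (z - h) * A + (1 - z / h) * v_D) MeasureTheory.volume 0 h := by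
      apply Continuous.intervalIntegrable
      continuity
    rw [intervalIntegral.integral_eq_sub_of_hasDerivAt hder hcont]
    have e1 : h ^ 2 / (2 * h) = h / 2 := by
      rw [sq, mul_comm (2:ℝ) h, ← div_div, mul_div_assoc, div_self hh0, mul_one]
    rw [e1]
    ring
  have key : (fun y => ∫ z in (0:ℝ)..(η y t), v₁ y z t)
      = fun y => -((η y t)^3 / 12 * deriv (fun y' => p y' t) y) + η y t * v_D / 2 :=
    funext hint
  rw [hmass x t, key]
  have hη1 : DifferentiableAt ℝ (fun y => η y t) x := (hηt.differentiable (by simp)) x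
  have hP1 : DifferentiableAt ℝ (fun y => deriv (fun y' => p y' t) y) x :=
    (hP.differentiable (by simp)) x
  have hf1 : DifferentiableAt ℝ (fun y => (η y t)^3 / 12 * deriv (fun y' => p y' t) y) x :=
    ((hη1.pow 3).div_const 12).mul hP1
  have hsplit : deriv (fun y => -((η y t)^3 / 12 * deriv (fun y' => p y' t) y) + η y t * v_D / 2) x
      = - deriv (fun y => (η y t)^3 / 12 * deriv (fun y' => p y' t) y) x
        + deriv (fun y => η y t) x * v_D / 2 := by
    rw [deriv_fun_add hf1.fun_neg (((hη1.mul_const v_D).div_const 2)), deriv.fun_neg]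
    congr 1
    rw [deriv_div_const, deriv_mul_const hη1]
  have hmul : deriv (fun y => η y t * v_D) x = deriv (fun y => η y t) x * v_D :=
    deriv_mul_const hη1 v_D
  rw [hsplit, hmul]
  ring
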